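/- There exists a constant B > 0 such that for all N ≥ 3, Σ_{p² ≤ N} 1/(p · ln(N/p)) < (ln ln N + B)/ln N, where the sum is over primes p with p² ≤ N. -/

import Mathlib

/-!
If `p² ≤ N` then `log (N / p) ≥ log N / 2`, hence
`1 / log (N / p) ≤ 1 / log N + 2 log p / (log N)²`, and the sum is controlled by Mertens'
estimates `∑_{p ≤ x} 1 / p ≤ log log x + O(1)` and `∑_{p ≤ x} log p / p ≤ log x + O(1)`.
The second follows from Legendre's formula for `log n!` and Chebyshev's bound `θ(n) ≤ n log 4`;
the first follows from the second by Abel summation against the weights `1 / ⌊log p⌋`.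
-/

open Finset Real
open scoped Nat

theorem Nat.div_le_factorization_factorial {p : ℕ} (hp : p.Prime) (n : ℕ) :
    n / p ≤ (n !).factorization p := by
  rcases n.eq_zero_or_pos with rfl | hn
  · simp
  rw [Nat.factorization_factorial hp (Nat.lt_succ_of_le (Nat.log_le_self p n))]
  simpa using single_le_sum (f := fun i => n / p ^ i) (fun _ _ => Nat.zero_le _)
    (mem_Ico.mpr ⟨le_rfl, Nat.succ_lt_succ hn⟩)

theorem sum_primesLE_div_mul_log_le_log_factorial (n : ℕ) :
    ∑ p ∈ Nat.primesLE n, ((n / p : ℕ) : ℝ) * log p ≤ log n ! := by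
  rw [log_nat_eq_sum_factorization, Finsupp.sum, Nat.support_factorization]
  calc ∑ p ∈ Nat.primesLE n, ((n / p : ℕ) : ℝ) * log p
      ≤ ∑ p ∈ Nat.primesLE n, ((n !).factorization p : ℝ) * log p := by
        gcongr with p hp
        exact Nat.div_le_factorization_factorial (Nat.prime_of_mem_primesLE hp) n
    _ ≤ ∑ p ∈ (n !).primeFactors, ((n !).factorization p : ℝ) * log p := by
        refine sum_le_sum_of_subset_of_nonneg (fun p hp => ?_) fun p _ _ => by positivity
        have hp' := Nat.prime_of_mem_primesLE hp
        exact Nat.mem_primeFactors.mpr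
          ⟨hp', Nat.dvd_factorial hp'.pos (Nat.le_of_mem_primesLE hp), Nat.factorial_ne_zero n⟩

theorem log_factorial_le_mul_log (n : ℕ) : log n ! ≤ n * log n := by
  rcases n.eq_zero_or_pos with rfl | hn
  · simp
  calc log n ! ≤ log ((n ^ n : ℕ) : ℝ) :=
        log_le_log (by positivity) (by exact_mod_cast Nat.factorial_le_pow n)
    _ = n * log n := by rw [Nat.cast_pow, log_pow]

theorem sum_primesLE_log_div_le (n : ℕ) :
    ∑ p ∈ Nat.primesLE n, log p / p ≤ log n + log 4 := by
  rcases n.eq_zero_or_pos with rfl | hn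
  · simpa using (log_pos (by norm_num : (1 : ℝ) < 4)).le
  have hn' : (0 : ℝ) < n := by exact_mod_cast hn
  -- `n / p < ⌊n / p⌋ + 1` trades the sum for `log n!` plus Chebyshev's `θ n ≤ n log 4`.
  have hfloor : ∀ p ∈ Nat.primesLE n, (n : ℝ) / p * log p ≤ ((n / p : ℕ) + 1) * log p :=
    fun p _ => mul_le_mul_of_nonneg_right
      (by rw [← Nat.floor_div_eq_div (K := ℝ)]; exact (Nat.lt_floor_add_one _).le)
      (log_natCast_nonneg p)
  have htheta : ∑ p ∈ Nat.primesLE n, log p ≤ n * log 4 := by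
    rw [← Chebyshev.theta_eq_sum_primesLE_log, mul_comm]
    exact Chebyshev.theta_le_log4_mul_x hn'.le
  rw [← mul_le_mul_iff_right₀ hn', mul_sum]
  calc ∑ p ∈ Nat.primesLE n, n * (log p / p)
      = ∑ p ∈ Nat.primesLE n, (n : ℝ) / p * log p := sum_congr rfl fun p _ => by ring
    _ ≤ ∑ p ∈ Nat.primesLE n, ((n / p : ℕ) + 1) * log p := sum_le_sum hfloor
    _ = ∑ p ∈ Nat.primesLE n, ((n / p : ℕ) : ℝ) * log p +
          ∑ p ∈ Nat.primesLE n, log p := by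
        rw [← sum_add_distrib]; exact sum_congr rfl fun p _ => by ring
    _ ≤ n * log n + n * log 4 :=
        add_le_add ((sum_primesLE_div_mul_log_le_log_factorial n).trans
          (log_factorial_le_mul_log n)) htheta
    _ = n * (log n + log 4) := by ring

theorem sum_primesLE_floor_log_div_le {x : ℝ} (hx : 1 ≤ x) :
    ∑ p ∈ Nat.primesLE ⌊x⌋₊, log p / p ≤ log x + log 4 := by
  have hfloor : (0 : ℝ) < ⌊x⌋₊ := by exact_mod_cast Nat.floor_pos.mpr hx
  have := log_le_log hfloor (Nat.floor_le (by linarith))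
  linarith [sum_primesLE_log_div_le ⌊x⌋₊]

theorem sum_Ico_one_div_sub_one_div_succ {k K : ℕ} (hkK : k ≤ K) :
    ∑ j ∈ Ico k K, (1 / (j : ℝ) - 1 / (j + 1)) = 1 / k - 1 / K := by
  induction K, hkK using Nat.le_induction with
  | base => simp
  | succ K hkK ih => rw [sum_Ico_succ_top hkK, ih]; push_cast; ring

theorem sum_Ico_one_div_sub_one_div_succ_le_one (K : ℕ) :
    ∑ j ∈ Ico 1 K, (1 / (j : ℝ) - 1 / (j + 1)) ≤ 1 := by
  rcases K.eq_zero_or_pos with rfl | hK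
  · simp
  rw [sum_Ico_one_div_sub_one_div_succ hK]
  simp only [Nat.cast_one, div_one, sub_le_self_iff]
  positivity

section PartialSummation

variable {ι : Type*} (s : Finset ι) (a : ι → ℝ) (k : ι → ℕ) {K : ℕ}

theorem sum_div_eq_div_add_sum_Ico (hk : ∀ i ∈ s, 1 ≤ k i ∧ k i ≤ K) :
    ∑ i ∈ s, a i / k i = (∑ i ∈ s, a i) / K +
      ∑ j ∈ Ico 1 K, (1 / (j : ℝ) - 1 / (j + 1)) * ∑ i ∈ s with k i ≤ j, a i := by
  have hsplit : ∀ i ∈ s, a i / k i =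
      a i / K + ∑ j ∈ Ico (k i) K, (1 / (j : ℝ) - 1 / (j + 1)) * a i := fun i hi => by
    rw [← sum_mul, sum_Ico_one_div_sub_one_div_succ (hk i hi).2]; ring
  rw [sum_congr rfl hsplit, sum_add_distrib, sum_div]
  congr 1
  simp_rw [mul_sum]
  refine sum_comm' fun i j => ?_
  simp only [mem_Ico, mem_filter]
  constructor
  · rintro ⟨hi, hkj, hjK⟩; exact ⟨⟨hi, hkj⟩, (hk i hi).1.trans hkj, hjK⟩
  · rintro ⟨⟨hi, hkj⟩, -, hjK⟩; exact ⟨hi, hkj, hjK⟩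

theorem sum_div_le_of_sum_filter_le (hk : ∀ i ∈ s, 1 ≤ k i ∧ k i ≤ K)
    {c : ℝ} (hc : 0 ≤ c)
    (hsum : ∀ j ∈ Ico 1 K, ∑ i ∈ s with k i ≤ j, a i ≤ j + 1 + c) :
    ∑ i ∈ s, a i / k i ≤ (∑ i ∈ s, a i) / K + harmonic K + c := by
  have hweight : ∀ j ∈ Ico 1 K, (1 / (j : ℝ) - 1 / (j + 1)) * (j + 1 + c) =
      (j : ℝ)⁻¹ + c * (1 / (j : ℝ) - 1 / (j + 1)) := fun j hj => by
    have : (0 : ℝ) < j := by exact_mod_cast (mem_Ico.mp hj).1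
    field_simp; ring
  have hharmonic : ∑ j ∈ Ico 1 K, (j : ℝ)⁻¹ ≤ harmonic K := by
    rw [harmonic_eq_sum_Icc, Rat.cast_sum]
    push_cast
    exact sum_le_sum_of_subset_of_nonneg Ico_subset_Icc_self fun _ _ _ => by positivity
  rw [sum_div_eq_div_add_sum_Ico s a k hk, add_assoc]
  gcongr
  calc ∑ j ∈ Ico 1 K, (1 / (j : ℝ) - 1 / (j + 1)) * ∑ i ∈ s with k i ≤ j, a i
      ≤ ∑ j ∈ Ico 1 K, (1 / (j : ℝ) - 1 / (j + 1)) * (j + 1 + c) := by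
        refine sum_le_sum fun j hj => mul_le_mul_of_nonneg_left (hsum j hj) ?_
        have : (0 : ℝ) < j := by exact_mod_cast (mem_Ico.mp hj).1
        exact sub_nonneg.mpr (one_div_le_one_div_of_le this (by linarith))
    _ = ∑ j ∈ Ico 1 K, (j : ℝ)⁻¹ +
          c * ∑ j ∈ Ico 1 K, (1 / (j : ℝ) - 1 / (j + 1)) := by
        rw [sum_congr rfl hweight, sum_add_distrib, mul_sum]
    _ ≤ harmonic K + c * 1 := by
        gcongr
        exact sum_Ico_one_div_sub_one_div_succ_le_one K
    _ = harmonic K + c := by ring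

end PartialSummation

theorem one_lt_log_of_three_le {x : ℝ} (hx : 3 ≤ x) : 1 < log x :=
  (lt_log_iff_exp_lt (by linarith)).mpr
    (exp_one_lt_d9.trans_le (by norm_num [hx] : (2.7182818286 : ℝ) ≤ 3) |>.trans_le hx)

theorem sum_filter_floor_log_le_log_div_le (s : Finset ℕ) (hs : ∀ p ∈ s, p.Prime) (j : ℕ) :
    ∑ p ∈ s.filter (fun p : ℕ => ⌊log p⌋₊ ≤ j), log p / p ≤ j + 1 + log 4 := by
  have hsub : s.filter (fun p : ℕ => ⌊log p⌋₊ ≤ j) ⊆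
      Nat.primesLE ⌊exp (j + 1)⌋₊ := by
    intro p hp
    obtain ⟨hp, hpj⟩ := mem_filter.mp hp
    have hlog : log p < j + 1 := by
      exact_mod_cast (Nat.floor_lt (log_natCast_nonneg p)).mp (Nat.lt_succ_of_le hpj)
    have hp0 : (0 : ℝ) < p := by exact_mod_cast (hs p hp).pos
    exact Nat.mem_primesLE.mpr
      ⟨Nat.le_floor ((log_lt_iff_lt_exp hp0).mp hlog).le, hs p hp⟩
  calc ∑ p ∈ s.filter (fun p : ℕ => ⌊log p⌋₊ ≤ j), log p / p
      ≤ ∑ p ∈ Nat.primesLE ⌊exp (j + 1)⌋₊, log p / p :=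
        sum_le_sum_of_subset_of_nonneg hsub fun p _ _ => by positivity
    _ ≤ log (exp (j + 1)) + log 4 := sum_primesLE_floor_log_div_le (one_le_exp (by positivity))
    _ = j + 1 + log 4 := by rw [log_exp]

theorem sum_one_div_le_of_three_le {s : Finset ℕ} {x : ℝ} (hx : 3 ≤ x)
    (hs : ∀ p ∈ s, p.Prime ∧ 3 ≤ (p : ℝ) ∧ (p : ℝ) ≤ x) :
    ∑ p ∈ s, (1 : ℝ) / p ≤ log (log x) + 3 + 2 * log 4 := by
  set L := log x
  have hL : 1 < L := one_lt_log_of_three_le hx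
  set K := ⌊L⌋₊
  have hK : (1 : ℝ) ≤ K := by exact_mod_cast (Nat.one_le_floor_iff L).mpr hL.le
  set k : ℕ → ℕ := fun p => ⌊log (p : ℝ)⌋₊
  have hk : ∀ p ∈ s, 1 ≤ k p ∧ k p ≤ K := fun p hp =>
    ⟨Nat.le_floor (by exact_mod_cast (one_lt_log_of_three_le (hs p hp).2.1).le),
      Nat.floor_le_floor (log_le_log (by linarith [hs p hp]) (hs p hp).2.2)⟩
  have hrecip : ∑ p ∈ s, (1 : ℝ) / p ≤ ∑ p ∈ s, log p / p / k p := by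
    refine sum_le_sum fun p hp => ?_
    have hp0 : (0 : ℝ) < p := by linarith [hs p hp]
    have hk0 : (0 : ℝ) < k p := by exact_mod_cast (hk p hp).1
    rw [div_div, div_le_div_iff₀ hp0 (by positivity), one_mul, mul_comm (log _)]
    exact mul_le_mul_of_nonneg_left (Nat.floor_le (log_natCast_nonneg p)) hp0.le
  have hblocks : ∀ j ∈ Ico 1 K, ∑ p ∈ s with k p ≤ j, log p / p ≤ j + 1 + log 4 :=
    fun j _ => sum_filter_floor_log_le_log_div_le s (fun p hp => (hs p hp).1) j
  have htotal : (∑ p ∈ s, log p / p) / K ≤ 2 + log 4 := by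
    have hsub : s ⊆ Nat.primesLE ⌊x⌋₊ := fun p hp =>
      Nat.mem_primesLE.mpr ⟨Nat.le_floor (hs p hp).2.2, (hs p hp).1⟩
    have hsum : ∑ p ∈ s, log p / p ≤ L + log 4 :=
      (sum_le_sum_of_subset_of_nonneg hsub fun p _ _ => by positivity).trans
        (sum_primesLE_floor_log_div_le (by linarith))
    rw [div_le_iff₀ (by linarith)]
    nlinarith [log_pos (by norm_num : (1 : ℝ) < 4), Nat.lt_floor_add_one L]
  have hharmonic : (harmonic K : ℝ) ≤ 1 + log L :=
    (harmonic_le_one_add_log K).trans (by gcongr; exact Nat.floor_le (by linarith))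
  linarith [sum_div_le_of_sum_filter_le s (fun p => log p / p) k hk
    (log_nonneg (by norm_num : (1 : ℝ) ≤ 4)) hblocks]

theorem sum_primesLE_floor_one_div_le {x : ℝ} (hx : 3 ≤ x) :
    ∑ p ∈ Nat.primesLE ⌊x⌋₊, (1 : ℝ) / p ≤ log (log x) + 7 / 2 + 2 * log 4 := by
  -- `2` is set aside since `⌊log 2⌋ = 0`.
  have h2 : 2 ∈ Nat.primesLE ⌊x⌋₊ :=
    Nat.mem_primesLE.mpr ⟨Nat.le_floor (by push_cast; linarith), Nat.prime_two⟩
  have hs : ∀ p ∈ (Nat.primesLE ⌊x⌋₊).erase 2,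
      p.Prime ∧ 3 ≤ (p : ℝ) ∧ (p : ℝ) ≤ x := fun p hp => by
    obtain ⟨hp2, hp⟩ := mem_erase.mp hp
    obtain ⟨hpx, hp⟩ := Nat.mem_primesLE.mp hp
    have : 3 ≤ p := by have := hp.two_le; omega
    exact ⟨hp, by exact_mod_cast this, (Nat.le_floor_iff (by linarith)).mp hpx⟩
  rw [← add_sum_erase _ _ h2]
  have := sum_one_div_le_of_three_le hx hs
  push_cast
  linarith

theorem one_div_sub_le_one_div_add {L l : ℝ} (hl : 0 ≤ l) (hlL : 2 * l ≤ L) (hL : 0 < L) :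
    1 / (L - l) ≤ 1 / L + 2 * l / L ^ 2 := by
  rw [div_add_div _ _ hL.ne' (by positivity), div_le_div_iff₀ (by linarith) (by positivity)]
  nlinarith [mul_nonneg (mul_nonneg hL.le hl) (by linarith : 0 ≤ L - 2 * l)]

theorem one_div_mul_log_div_le {N p : ℝ} (hp : 1 ≤ p) (hpN : p ^ 2 ≤ N) (hN : 1 < N) :
    1 / (p * log (N / p)) ≤ 1 / log N * (1 / p) + 2 / log N ^ 2 * (log p / p) := by
  have hlogp : 2 * log p ≤ log N := by
    have := log_le_log (by positivity) hpN
    rwa [log_pow, Nat.cast_ofNat] at this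
  calc 1 / (p * log (N / p)) = 1 / p * (1 / (log N - log p)) := by
        rw [log_div (by linarith) (by linarith), one_div_mul_one_div]
    _ ≤ 1 / p * (1 / log N + 2 * log p / log N ^ 2) := by
        gcongr
        exact one_div_sub_le_one_div_add (log_nonneg hp) hlogp (log_pos hN)
    _ = 1 / log N * (1 / p) + 2 / log N ^ 2 * (log p / p) := by ring

/-- There is a constant `B > 0` with
`Σ_{p² ≤ N} 1/(p ln(N/p)) < (ln ln N + B)/ln N` for all `N ≥ 3`. -/
theorem sum_one_div_p_log_lt : ∃ B : ℝ, 0 < B ∧ ∀ N : ℝ, 3 ≤ N →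
    ∑ p ∈ (Finset.range (⌊N⌋₊ + 1)).filter (fun p : ℕ => p.Prime ∧ ((p : ℝ)) ^ 2 ≤ N),
        1 / ((p : ℝ) * Real.log (N / p)) <
      (Real.log (Real.log N) + B) / Real.log N := by
  refine ⟨11 / 2 + 4 * log 4, by positivity, fun N hN => ?_⟩
  set A := (range (⌊N⌋₊ + 1)).filter (fun p : ℕ => p.Prime ∧ ((p : ℝ)) ^ 2 ≤ N)
  set L := log N
  have hL : 1 < L := one_lt_log_of_three_le hN
  have hA : A ⊆ Nat.primesLE ⌊N⌋₊ := fun p hp => by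
    simp only [A, mem_filter, mem_range] at hp
    exact Nat.mem_primesLE.mpr ⟨Nat.lt_succ_iff.mp hp.1, hp.2.1⟩
  have hterm : ∀ p ∈ A,
      1 / ((p : ℝ) * log (N / p)) ≤ 1 / L * (1 / p) + 2 / L ^ 2 * (log p / p) := fun p hp => by
    obtain ⟨-, hprime, hp2⟩ := by simpa only [A, mem_filter] using hp
    exact one_div_mul_log_div_le (by exact_mod_cast hprime.one_le) hp2 (by linarith)
  have hrecip : ∑ p ∈ A, (1 : ℝ) / p ≤ log L + 7 / 2 + 2 * log 4 :=
    (sum_le_sum_of_subset_of_nonneg hA fun p _ _ => by positivity).trans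
      (sum_primesLE_floor_one_div_le hN)
  have hlogdiv : ∑ p ∈ A, log p / p ≤ L + log 4 :=
    (sum_le_sum_of_subset_of_nonneg hA fun p _ _ => by positivity).trans
      (sum_primesLE_floor_log_div_le (by linarith))
  have hsmall : 2 * log 4 / L < 2 * log 4 := div_lt_self (by positivity) hL
  calc ∑ p ∈ A, 1 / ((p : ℝ) * log (N / p))
      ≤ 1 / L * ∑ p ∈ A, (1 : ℝ) / p + 2 / L ^ 2 * ∑ p ∈ A, log p / p := by
        rw [mul_sum, mul_sum, ← sum_add_distrib]; exact sum_le_sum hterm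
    _ ≤ 1 / L * (log L + 7 / 2 + 2 * log 4) + 2 / L ^ 2 * (L + log 4) := by gcongr
    _ = (log L + 11 / 2 + 2 * log 4 + 2 * log 4 / L) / L := by field_simp; ring
    _ < (log L + (11 / 2 + 4 * log 4)) / L :=
        (div_lt_div_iff_of_pos_right (by linarith)).mpr (by linarith)
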